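/- Let X be a nonempty compact metric space and μ a finite Borel measure on X with full support (μ(U) > 0 for every nonempty open U ⊆ X). Let u, w : X → ℝ be continuous with min u = 0, max u = l > 0 and min w = 0. For t ∈ [0,1] set h_t := min(t·l, u) + w and g(t) := ∫_X normalize(h_t) dμ. Then the following are equivalent: (i) g(0) ≤ g(t) for all t ∈ [0,1]; (ii) argmin(u) ∩ argmin(w) ≠ ∅; (iii) ∫_X normalize(u+w) dμ = ∫_X normalize(u) dμ + ∫_X normalize(w) dμ. -/

import Mathlib

open MeasureTheory Set

/-- The (attained) minimum of `f` on a nonempty compact space. -/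
noncomputable def minF {X : Type*} (f : X → ℝ) : ℝ := sInf (Set.range f)

/-- The (attained) maximum of `f` on a nonempty compact space. -/
noncomputable def maxF {X : Type*} (f : X → ℝ) : ℝ := sSup (Set.range f)

/-- The oscillation `max f - min f`. -/
noncomputable def oscF {X : Type*} (f : X → ℝ) : ℝ := maxF f - minF f

/-- `normalize f = f - min f`. -/
noncomputable def normF {X : Type*} (f : X → ℝ) : X → ℝ := fun x => f x - minF f

/-- The minimizer set of `f`. -/
def argminF {X : Type*} (f : X → ℝ) : Set X := {x | f x = minF f}

/-- The maximizer set of `f`. -/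
def argmaxF {X : Type*} (f : X → ℝ) : Set X := {x | f x = maxF f}

/-!
Write `M = μ(X)`, so `∫ normalize f = ∫ f - M · min f`. Since `min (f + g) ≥ min f + min g`, with
equality exactly when `f` and `g` have a common minimiser, `∫ normalize` is additive on `f + g`
iff `argmin f ∩ argmin g ≠ ∅`, as `M > 0`. This gives (ii) ⇔ (iii).

For (i) note `h₀ = w`. Given a common zero of `u` and `w`, every `h_t ≥ h₀` attains the minimum `0`,
so `g(t) ≥ g(0)`. Otherwise `m := min (u + w) > 0`, and for `0 < a ≤ m` the function
`min(a, u) + w` is bounded below by `a`, so its normalization loses at least `M · a`, while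
`∫ min(a, u) < M · a` because `u < a` on a nonempty open set and `μ` has full support.
-/

section Minimum

variable {X : Type*} {f g : X → ℝ}

lemma le_minF [Nonempty X] {a : ℝ} (h : ∀ x, a ≤ f x) : a ≤ minF f :=
  le_csInf (range_nonempty f) (forall_mem_range.2 h)

lemma minF_eq_of_forall_le {a : ℝ} (h : ∀ x, a ≤ f x) {x₀ : X} (hx₀ : f x₀ = a) :
    minF f = a :=
  have : Nonempty X := ⟨x₀⟩
  le_antisymm (hx₀ ▸ csInf_le ⟨a, forall_mem_range.2 h⟩ (mem_range_self x₀)) (le_minF h)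

lemma normF_eq_self_of_minF_eq_zero (h : minF f = 0) : normF f = f := by
  funext x
  simp [normF, h]

variable [TopologicalSpace X] [CompactSpace X]

lemma minF_le (hf : Continuous f) (x : X) : minF f ≤ f x :=
  csInf_le (isCompact_range hf).bddBelow (mem_range_self x)

lemma exists_eq_minF [Nonempty X] (hf : Continuous f) : ∃ x, f x = minF f :=
  (isCompact_range hf).sInf_mem (range_nonempty f)

lemma minF_add_minF_le [Nonempty X] (hf : Continuous f) (hg : Continuous g) :
    minF f + minF g ≤ minF (fun x => f x + g x) :=
  le_minF fun x => add_le_add (minF_le hf x) (minF_le hg x)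

lemma minF_add_eq_iff [Nonempty X] (hf : Continuous f) (hg : Continuous g) :
    minF (fun x => f x + g x) = minF f + minF g ↔ (argminF f ∩ argminF g).Nonempty := by
  constructor
  · intro h
    obtain ⟨x, hx⟩ := exists_eq_minF (hf.add hg)
    replace hx : f x + g x = minF f + minF g := hx.trans h
    have hfx := minF_le hf x
    have hgx := minF_le hg x
    exact ⟨x, show f x = minF f by linarith, show g x = minF g by linarith⟩
  · rintro ⟨x, hfx, hgx⟩
    exact minF_eq_of_forall_le (fun y => add_le_add (minF_le hf y) (minF_le hg y))
      (congrArg₂ (· + ·) hfx hgx)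

end Minimum

section Integral

variable {X : Type*} [TopologicalSpace X] [CompactSpace X] [MeasurableSpace X]
  [OpensMeasurableSpace X] (μ : Measure X) [IsFiniteMeasure μ] {f g : X → ℝ}

lemma Continuous.integrable_of_compactSpace (hf : Continuous f) : Integrable f μ :=
  hf.integrable_of_hasCompactSupport (HasCompactSupport.of_compactSpace f)

lemma integral_normF (hf : Continuous f) :
    ∫ x, normF f x ∂μ = ∫ x, f x ∂μ - μ.real univ * minF f := by
  rw [show normF f = fun x => f x - minF f from rfl,
    integral_sub (hf.integrable_of_compactSpace μ) (integrable_const _), integral_const,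
    smul_eq_mul]

lemma integral_normF_add (hf : Continuous f) (hg : Continuous g) :
    ∫ x, normF (fun x => f x + g x) x ∂μ = ∫ x, normF f x ∂μ + ∫ x, normF g x ∂μ
      - μ.real univ * (minF (fun x => f x + g x) - (minF f + minF g)) := by
  rw [integral_normF μ hf, integral_normF μ hg,
    integral_normF μ (f := fun x => f x + g x) (hf.add hg),
    integral_add (hf.integrable_of_compactSpace μ) (hg.integrable_of_compactSpace μ)]
  ring

lemma integral_lt_integral_of_continuous [μ.IsOpenPosMeasure] (hf : Continuous f)
    (hg : Continuous g) (hle : ∀ x, f x ≤ g x) {x₀ : X} (hlt : f x₀ < g x₀) :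
    ∫ x, f x ∂μ < ∫ x, g x ∂μ := by
  have hf_int := hf.integrable_of_compactSpace μ
  have hg_int := hg.integrable_of_compactSpace μ
  have hpos : 0 < ∫ x, (g x - f x) ∂μ :=
    integral_pos_of_integrable_nonneg_nonzero (hg.sub hf) (hg_int.sub hf_int)
      (fun x => sub_nonneg.2 (hle x)) (sub_ne_zero.2 hlt.ne')
  rw [integral_sub hg_int hf_int] at hpos
  linarith

theorem integral_normF_add_eq_iff [Nonempty X] [μ.IsOpenPosMeasure] (hf : Continuous f)
    (hg : Continuous g) :
    ∫ x, normF (fun x => f x + g x) x ∂μ = ∫ x, normF f x ∂μ + ∫ x, normF g x ∂μ ↔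
      (argminF f ∩ argminF g).Nonempty := by
  rw [← minF_add_eq_iff hf hg, integral_normF_add μ hf hg, sub_eq_self,
    mul_eq_zero, sub_eq_zero, or_iff_right measureReal_univ_pos.ne']

variable {u w : X → ℝ}

lemma integral_le_integral_normF_min_add_of_common_zero (hu : Continuous u) (hw : Continuous w)
    {a : ℝ} (ha : 0 ≤ a) (humin : minF u = 0) (hwmin : minF w = 0)
    (h : (argminF u ∩ argminF w).Nonempty) :
    ∫ x, w x ∂μ ≤ ∫ x, normF (fun x => min a (u x) + w x) x ∂μ := by
  obtain ⟨x₀, hux₀, hwx₀⟩ := h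
  have hmin_nonneg : ∀ x, 0 ≤ min a (u x) := fun x => le_min ha (humin ▸ minF_le hu x)
  have hmin : minF (fun x => min a (u x) + w x) = 0 := by
    refine minF_eq_of_forall_le (fun x => add_nonneg (hmin_nonneg x) (hwmin ▸ minF_le hw x))
      (x₀ := x₀) ?_
    rw [show u x₀ = 0 from hux₀.trans humin, show w x₀ = 0 from hwx₀.trans hwmin,
      min_eq_right ha, add_zero]
  rw [normF_eq_self_of_minF_eq_zero hmin]
  exact integral_mono (hw.integrable_of_compactSpace μ)
    (((continuous_const.min hu).add hw).integrable_of_compactSpace μ)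
    fun x => le_add_of_nonneg_left (hmin_nonneg x)

lemma integral_normF_min_add_lt_integral [Nonempty X] [μ.IsOpenPosMeasure] (hu : Continuous u)
    (hw : Continuous w) {a : ℝ} (ha : 0 < a) (hau : a ≤ minF (fun x => u x + w x))
    (humin : minF u = 0) (hwmin : minF w = 0) :
    ∫ x, normF (fun x => min a (u x) + w x) x ∂μ < ∫ x, w x ∂μ := by
  have hmin_cont : Continuous fun x => min a (u x) := continuous_const.min hu
  have ha_le : a ≤ minF (fun x => min a (u x) + w x) := by
    refine le_minF fun x => ?_
    have hwx : 0 ≤ w x := hwmin ▸ minF_le hw x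
    rcases le_total a (u x) with hux | hux
    · rw [min_eq_left hux]
      linarith
    · rw [min_eq_right hux]
      have hsum : minF (fun x => u x + w x) ≤ u x + w x := minF_le (hu.add hw) x
      linarith
  obtain ⟨x₀, hx₀⟩ := exists_eq_minF hu
  have hlt : ∫ x, min a (u x) ∂μ < ∫ _, a ∂μ :=
    integral_lt_integral_of_continuous μ hmin_cont continuous_const (fun x => min_le_left _ _)
      (x₀ := x₀) (by rw [hx₀, humin, min_eq_right ha.le]; exact ha)
  rw [integral_const, smul_eq_mul] at hlt
  have hM := mul_le_mul_of_nonneg_left ha_le (measureReal_nonneg (μ := μ) (s := univ))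
  rw [integral_normF μ (f := fun x => min a (u x) + w x) (hmin_cont.add hw),
    integral_add (hmin_cont.integrable_of_compactSpace μ) (hw.integrable_of_compactSpace μ)]
  linarith

theorem forall_integral_normF_le_integral_normF_min_add_iff [Nonempty X] [μ.IsOpenPosMeasure]
    (hu : Continuous u) (hw : Continuous w) {l : ℝ} (hl : 0 < l) (humin : minF u = 0)
    (hwmin : minF w = 0) :
    (∀ t ∈ Icc (0 : ℝ) 1,
      ∫ x, normF w x ∂μ ≤ ∫ x, normF (fun x => min (t * l) (u x) + w x) x ∂μ) ↔
      (argminF u ∩ argminF w).Nonempty := by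
  rw [normF_eq_self_of_minF_eq_zero hwmin]
  refine ⟨fun h => ?_, fun hQ t ht => integral_le_integral_normF_min_add_of_common_zero μ hu hw
    (mul_nonneg ht.1 hl.le) humin hwmin hQ⟩
  by_contra hQ
  set m := minF (fun x => u x + w x)
  have hm : 0 < m := by
    have hle : 0 ≤ m := by simpa [humin, hwmin] using minF_add_minF_le hu hw
    refine hle.lt_of_ne fun hm => hQ ((minF_add_eq_iff hu hw).1 ?_)
    rw [humin, hwmin, add_zero]
    exact hm.symm
  set t := min 1 (m / l)
  have ht : 0 < t := lt_min one_pos (div_pos hm hl)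
  have htl : t * l ≤ m := (le_div_iff₀ hl).1 (min_le_right _ _)
  exact (h t ⟨ht.le, min_le_left _ _⟩).not_gt
    (integral_normF_min_add_lt_integral μ hu hw (mul_pos ht hl) htl humin hwmin)

end Integral

theorem stmt_15_general {X : Type*} [MetricSpace X] [CompactSpace X] [Nonempty X]
    [MeasurableSpace X] [BorelSpace X]
    (μ : Measure X) [IsFiniteMeasure μ]
    (hfull : ∀ U : Set X, IsOpen U → U.Nonempty → 0 < μ U)
    (u w : X → ℝ) (hu : Continuous u) (hw : Continuous w)
    (l : ℝ) (hl : 0 < l) (humin : minF u = 0)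
    (hwmin : minF w = 0) :
    ((∀ t ∈ Set.Icc (0:ℝ) 1,
        (∫ x, normF (fun x => min ((0:ℝ) * l) (u x) + w x) x ∂μ) ≤
          ∫ x, normF (fun x => min (t * l) (u x) + w x) x ∂μ) ↔
      (argminF u ∩ argminF w).Nonempty) ∧
    ((∀ t ∈ Set.Icc (0:ℝ) 1,
        (∫ x, normF (fun x => min ((0:ℝ) * l) (u x) + w x) x ∂μ) ≤
          ∫ x, normF (fun x => min (t * l) (u x) + w x) x ∂μ) ↔
      (∫ x, normF (fun x => u x + w x) x ∂μ) =
        (∫ x, normF u x ∂μ) + ∫ x, normF w x ∂μ) := by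
  have : μ.IsOpenPosMeasure := ⟨fun U hU hne => (hfull U hU hne).ne'⟩
  have h_zero : (fun x => min ((0:ℝ) * l) (u x) + w x) = w := by
    funext x
    rw [zero_mul, min_eq_left (humin ▸ minF_le hu x), zero_add]
  rw [h_zero]
  have hPQ := forall_integral_normF_le_integral_normF_min_add_iff μ hu hw hl humin hwmin
  exact ⟨hPQ, hPQ.trans (integral_normF_add_eq_iff μ hu hw).symm⟩

theorem stmt_15 {X : Type*} [MetricSpace X] [CompactSpace X] [Nonempty X]
    [MeasurableSpace X] [BorelSpace X]
    (μ : Measure X) [IsFiniteMeasure μ]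
    (hfull : ∀ U : Set X, IsOpen U → U.Nonempty → 0 < μ U)
    (u w : X → ℝ) (hu : Continuous u) (hw : Continuous w)
    (l : ℝ) (hl : 0 < l) (humin : minF u = 0) (humax : maxF u = l)
    (hwmin : minF w = 0) :
    ((∀ t ∈ Set.Icc (0:ℝ) 1,
        (∫ x, normF (fun x => min ((0:ℝ) * l) (u x) + w x) x ∂μ) ≤
          ∫ x, normF (fun x => min (t * l) (u x) + w x) x ∂μ) ↔
      (argminF u ∩ argminF w).Nonempty) ∧
    ((∀ t ∈ Set.Icc (0:ℝ) 1,
        (∫ x, normF (fun x => min ((0:ℝ) * l) (u x) + w x) x ∂μ) ≤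
          ∫ x, normF (fun x => min (t * l) (u x) + w x) x ∂μ) ↔
      (∫ x, normF (fun x => u x + w x) x ∂μ) =
        (∫ x, normF u x ∂μ) + ∫ x, normF w x ∂μ) :=
  stmt_15_general μ hfull u w hu hw l hl humin hwmin
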